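/- For the diagonal static ansatz, all mixed time–space components of the field equation vanish identically: for every spatial index m ∈ {1,2,3}, every point of ℝ³, and all real coefficients β₁,…,β₆, α₁,…,α₁₂, one has L_{0m} = L_{m0} = 0 and Q_{0m} = Q_{m0} = 0. -/
import Mathlib


noncomputable section

/-- Partial derivative along the `i`-th spatial coordinate of `ℝ³`. -/
def pd (i : Fin 3) (h : (Fin 3 → ℝ) → ℝ) : (Fin 3 → ℝ) → ℝ :=
  fun x => fderiv ℝ h x (Pi.single i 1)

/-- The operator `∂_α` on `ℝ⁴`-indexed coordinates, acting on fields independent of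
the time coordinate `x⁰` (so `∂₀ ≡ 0`). -/
def D : Fin 4 → ((Fin 3 → ℝ) → ℝ) → (Fin 3 → ℝ) → ℝ :=
  ![fun _ _ => 0, pd 0, pd 1, pd 2]

/-- The diagonal static coframe `θ^a_α = diag(e^f, e^g, e^g, e^g)`. -/
def θc (f g : (Fin 3 → ℝ) → ℝ) (a α : Fin 4) (x : Fin 3 → ℝ) : ℝ :=
  if a = α then Real.exp (if a = 0 then f x else g x) else 0

/-- The inverse frame `e_a^α = diag(e^{−f}, e^{−g}, e^{−g}, e^{−g})`. -/
def fr (f g : (Fin 3 → ℝ) → ℝ) (a α : Fin 4) (x : Fin 3 → ℝ) : ℝ :=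
  if a = α then Real.exp (-(if a = 0 then f x else g x)) else 0

/-- `C^a_{bc} := Σ_{α,β} e_b^α e_c^β (∂_α θ^a_β − ∂_β θ^a_α)`. -/
def Cc (f g : (Fin 3 → ℝ) → ℝ) (a b c : Fin 4) (x : Fin 3 → ℝ) : ℝ :=
  ∑ α, ∑ β, fr f g b α x * fr f g c β x * (D α (θc f g a β) x - D β (θc f g a α) x)

/-- `B^a_{bcd} := Σ_α e_d^α ∂_α C^a_{bc}`. -/
def Bb (f g : (Fin 3 → ℝ) → ℝ) (a b c d : Fin 4) (x : Fin 3 → ℝ) : ℝ :=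
  ∑ α, fr f g d α x * D α (Cc f g a b c) x

/-- The Minkowski matrix `η = diag(1,−1,−1,−1)` (its own inverse). -/
def eta (a b : Fin 4) : ℝ := if a = b then (if a = 0 then 1 else -1) else 0

/-- Spatial Laplacian `Δh := h_{11} + h_{22} + h_{33}`. -/
def lap (h : (Fin 3 → ℝ) → ℝ) (x : Fin 3 → ℝ) : ℝ := ∑ i, pd i (pd i h) x

/-- `∇h₁·∇h₂ := Σ_m (h₁)_m (h₂)_m`. -/
def gdot (h₁ h₂ : (Fin 3 → ℝ) → ℝ) (x : Fin 3 → ℝ) : ℝ := ∑ i, pd i h₁ x * pd i h₂ x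

/-- `C` with the first index lowered: `C_{abc} := Σ_{a'} η_{aa'} C^{a'}_{bc}`. -/
def Clow (f g : (Fin 3 → ℝ) → ℝ) (a b c : Fin 4) (x : Fin 3 → ℝ) : ℝ :=
  ∑ p, eta a p * Cc f g p b c x

/-- The 1-indexed `C`-object `C_a := Σ_m C^m_{am}`. -/
def Cone (f g : (Fin 3 → ℝ) → ℝ) (a : Fin 4) (x : Fin 3 → ℝ) : ℝ :=
  ∑ m, Cc f g m a m x

/-- The raised 1-indexed `C`-object `C^a := Σ_b η^{ab} C_b`. -/
def Cup (f g : (Fin 3 → ℝ) → ℝ) (a : Fin 4) (x : Fin 3 → ℝ) : ℝ :=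
  ∑ b, eta a b * Cone f g b x

/-- `B` with the first index lowered. -/
def Blow (f g : (Fin 3 → ℝ) → ℝ) (a b c d : Fin 4) (x : Fin 3 → ℝ) : ℝ :=
  ∑ p, eta a p * Bb f g p b c d x

/-- `⁽¹⁾B_{ab} := Σ_{m,k} η^{mk} B_{abmk}`. -/
def B1 (f g : (Fin 3 → ℝ) → ℝ) (a b : Fin 4) (x : Fin 3 → ℝ) : ℝ :=
  ∑ m, ∑ k, eta m k * Blow f g a b m k x

/-- `⁽²⁾B_{ab} := Σ_m B^m_{mab}`. -/
def B2 (f g : (Fin 3 → ℝ) → ℝ) (a b : Fin 4) (x : Fin 3 → ℝ) : ℝ :=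
  ∑ m, Bb f g m m a b x

/-- `⁽³⁾B_{ab} := Σ_m B^m_{abm}`. -/
def B3 (f g : (Fin 3 → ℝ) → ℝ) (a b : Fin 4) (x : Fin 3 → ℝ) : ℝ :=
  ∑ m, Bb f g m a b m x

/-- The scalar `B := Σ_{a,b,c} η^{bc} B^a_{abc}`. -/
def Bscal (f g : (Fin 3 → ℝ) → ℝ) (x : Fin 3 → ℝ) : ℝ :=
  ∑ a, ∑ b, ∑ c, eta b c * Bb f g a a b c x

/-- `⁽¹⁾A_{ab} := Σ_m C_{abm} C^m`. -/
def A1 (f g : (Fin 3 → ℝ) → ℝ) (a b : Fin 4) (x : Fin 3 → ℝ) : ℝ :=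
  ∑ m, Clow f g a b m x * Cup f g m x

/-- `⁽²⁾A_{ab} := Σ_m C_{mab} C^m`. -/
def A2 (f g : (Fin 3 → ℝ) → ℝ) (a b : Fin 4) (x : Fin 3 → ℝ) : ℝ :=
  ∑ m, Clow f g m a b x * Cup f g m x

/-- `⁽³⁾A_{ab} := Σ_{m,n} C_{amn} C_b{}^{mn}`. -/
def A3 (f g : (Fin 3 → ℝ) → ℝ) (a b : Fin 4) (x : Fin 3 → ℝ) : ℝ :=
  ∑ m, ∑ n, Clow f g a m n x * (∑ p, ∑ q, eta m p * eta n q * Clow f g b p q x)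

/-- `⁽⁴⁾A_{ab} := Σ_{m,n} C_{amn} C^m{}_b{}^n`. -/
def A4 (f g : (Fin 3 → ℝ) → ℝ) (a b : Fin 4) (x : Fin 3 → ℝ) : ℝ :=
  ∑ m, ∑ n, Clow f g a m n x * (∑ p, ∑ q, eta m p * eta n q * Clow f g p b q x)

/-- `⁽⁵⁾A_{ab} := Σ_{m,n} C_{man} C^n{}_b{}^m`. -/
def A5 (f g : (Fin 3 → ℝ) → ℝ) (a b : Fin 4) (x : Fin 3 → ℝ) : ℝ :=
  ∑ m, ∑ n, Clow f g m a n x * (∑ p, ∑ q, eta n p * eta m q * Clow f g p b q x)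

/-- `⁽⁶⁾A_{ab} := Σ_{m,n} C_{man} C^m{}_b{}^n`. -/
def A6 (f g : (Fin 3 → ℝ) → ℝ) (a b : Fin 4) (x : Fin 3 → ℝ) : ℝ :=
  ∑ m, ∑ n, Clow f g m a n x * (∑ p, ∑ q, eta m p * eta n q * Clow f g p b q x)

/-- `⁽⁷⁾A_{ab} := C_a C_b`. -/
def A7 (f g : (Fin 3 → ℝ) → ℝ) (a b : Fin 4) (x : Fin 3 → ℝ) : ℝ :=
  Cone f g a x * Cone f g b x

/-- The scalar `⁽¹⁾A`, the η-trace of `⁽¹⁾A_{ab}`. -/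
def A1s (f g : (Fin 3 → ℝ) → ℝ) (x : Fin 3 → ℝ) : ℝ := ∑ a, ∑ b, eta a b * A1 f g a b x

/-- The scalar `⁽²⁾A`, the η-trace of `⁽³⁾A_{ab}`. -/
def A2s (f g : (Fin 3 → ℝ) → ℝ) (x : Fin 3 → ℝ) : ℝ := ∑ a, ∑ b, eta a b * A3 f g a b x

/-- The scalar `⁽³⁾A`, the η-trace of `⁽⁴⁾A_{ab}`. -/
def A3s (f g : (Fin 3 → ℝ) → ℝ) (x : Fin 3 → ℝ) : ℝ := ∑ a, ∑ b, eta a b * A4 f g a b x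

/-- The leading (second order) part `L_{ab}` of the general coframe field equation. -/
def Lmat (f g : (Fin 3 → ℝ) → ℝ) (β₁ β₂ β₃ β₄ β₅ β₆ : ℝ) (a b : Fin 4)
    (x : Fin 3 → ℝ) : ℝ :=
  β₁ * ((B1 f g a b x + B1 f g b a x) / 2) + β₂ * ((B2 f g a b x + B2 f g b a x) / 2) +
  β₃ * B3 f g a b x + β₄ * eta a b * Bscal f g x +
  β₅ * ((B1 f g a b x - B1 f g b a x) / 2) + β₆ * ((B2 f g a b x - B2 f g b a x) / 2)

/-- The quadratic part `Q_{ab}` of the general coframe field equation. -/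
def Qmat (f g : (Fin 3 → ℝ) → ℝ) (α₁ α₂ α₃ α₄ α₅ α₆ α₇ α₈ α₉ α₁₀ α₁₁ α₁₂ : ℝ)
    (a b : Fin 4) (x : Fin 3 → ℝ) : ℝ :=
  α₁ * ((A1 f g a b x + A1 f g b a x) / 2) + α₂ * A2 f g a b x + α₃ * A3 f g a b x +
  α₄ * ((A4 f g a b x + A4 f g b a x) / 2) + α₅ * A5 f g a b x + α₆ * A6 f g a b x +
  α₇ * A7 f g a b x + α₈ * ((A1 f g a b x - A1 f g b a x) / 2) +
  α₉ * ((A4 f g a b x - A4 f g b a x) / 2) +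
  eta a b * (α₁₀ * A1s f g x + α₁₁ * A2s f g x + α₁₂ * A3s f g x)

section Helpers

variable (f g : (Fin 3 → ℝ) → ℝ)

lemma D_time (h : (Fin 3 → ℝ) → ℝ) (x : Fin 3 → ℝ) : D 0 h x = 0 := rfl

lemma pd_zero_fun (i : Fin 3) (x : Fin 3 → ℝ) : pd i (fun _ => (0:ℝ)) x = 0 := by
  simp [pd]

lemma D_zero_fun (α : Fin 4) (x : Fin 3 → ℝ) : D α (fun _ => (0:ℝ)) x = 0 := by
  fin_cases α
  · rfl
  · exact pd_zero_fun 0 x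
  · exact pd_zero_fun 1 x
  · exact pd_zero_fun 2 x

lemma D_theta_ne (α a β : Fin 4) (h : a ≠ β) (x : Fin 3 → ℝ) :
    D α (θc f g a β) x = 0 := by
  have hθ : θc f g a β = fun _ => 0 := by funext y; simp [θc, h]
  rw [hθ]; exact D_zero_fun α x

lemma Cc_b0 (a c : Fin 4) (ha : a ≠ 0) (x : Fin 3 → ℝ) : Cc f g a 0 c x = 0 := by
  unfold Cc
  refine Finset.sum_eq_zero fun α _ => Finset.sum_eq_zero fun β _ => ?_
  by_cases hα : (0:Fin 4) = α
  · subst hα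
    rw [D_time, D_theta_ne f g β a 0 ha]
    simp
  · simp [fr, hα]

lemma Cc_c0 (a b : Fin 4) (ha : a ≠ 0) (x : Fin 3 → ℝ) : Cc f g a b 0 x = 0 := by
  unfold Cc
  refine Finset.sum_eq_zero fun α _ => Finset.sum_eq_zero fun β _ => ?_
  by_cases hβ : (0:Fin 4) = β
  · subst hβ
    rw [D_time, D_theta_ne f g α a 0 ha]
    simp
  · simp [fr, hβ]

lemma Cc_0bc (b c : Fin 4) (hb : b ≠ 0) (hc : c ≠ 0) (x : Fin 3 → ℝ) :
    Cc f g 0 b c x = 0 := by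
  unfold Cc
  refine Finset.sum_eq_zero fun α _ => Finset.sum_eq_zero fun β _ => ?_
  by_cases hα : b = α
  · by_cases hβ : c = β
    · subst hα; subst hβ
      rw [D_theta_ne f g b 0 c (Ne.symm hc), D_theta_ne f g c 0 b (Ne.symm hb)]
      simp
    · simp [fr, hβ]
  · simp [fr, hα]

lemma Cc000 (x : Fin 3 → ℝ) : Cc f g 0 0 0 x = 0 := by
  unfold Cc
  refine Finset.sum_eq_zero fun α _ => Finset.sum_eq_zero fun β _ => ?_
  by_cases hα : (0:Fin 4) = α
  · by_cases hβ : (0:Fin 4) = β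
    · subst hα; subst hβ; simp [D_time]
    · simp [fr, hβ]
  · simp [fr, hα]

lemma Bb_d0 (a b c : Fin 4) (x : Fin 3 → ℝ) : Bb f g a b c 0 x = 0 := by
  unfold Bb
  refine Finset.sum_eq_zero fun α _ => ?_
  by_cases hα : (0:Fin 4) = α
  · subst hα; rw [D_time]; ring
  · simp [fr, hα]

lemma Bb_of_C {a b c : Fin 4} (h : ∀ y, Cc f g a b c y = 0) (d : Fin 4)
    (x : Fin 3 → ℝ) : Bb f g a b c d x = 0 := by
  have hC : Cc f g a b c = fun _ => 0 := funext h
  unfold Bb; rw [hC]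
  exact Finset.sum_eq_zero fun α _ => by rw [D_zero_fun]; ring

lemma Blow_eq (a b c d : Fin 4) (x : Fin 3 → ℝ) :
    Blow f g a b c d x = (if a = 0 then 1 else -1) * Bb f g a b c d x := by
  simp [Blow, eta, ite_mul, Finset.sum_ite_eq]

lemma Clow_eq (a b c : Fin 4) (x : Fin 3 → ℝ) :
    Clow f g a b c x = (if a = 0 then 1 else -1) * Cc f g a b c x := by
  simp [Clow, eta, ite_mul, Finset.sum_ite_eq]

lemma Cone0 (x : Fin 3 → ℝ) : Cone f g 0 x = 0 := by
  unfold Cone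
  refine Finset.sum_eq_zero fun k _ => ?_
  by_cases hk : k = 0
  · subst hk; exact Cc000 f g x
  · exact Cc_b0 f g k k hk x

lemma Cup0 (x : Fin 3 → ℝ) : Cup f g 0 x = 0 := by
  have : Cup f g 0 x = (if (0:Fin 4) = 0 then 1 else -1) * Cone f g 0 x := by
    simp [Cup, eta, ite_mul, Finset.sum_ite_eq]
  rw [this, Cone0]; ring

end Helpers
section Mixed

variable (f g : (Fin 3 → ℝ) → ℝ) (m : Fin 4) (x : Fin 3 → ℝ)

lemma B1_0m (hm : m ≠ 0) : B1 f g 0 m x = 0 := by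
  unfold B1
  refine Finset.sum_eq_zero fun p _ => Finset.sum_eq_zero fun k _ => ?_
  by_cases hpk : p = k
  · subst hpk
    rw [Blow_eq]
    by_cases hp : p = 0
    · subst hp; rw [Bb_d0]; ring
    · rw [Bb_of_C f g (fun y => Cc_0bc f g m p hm hp y)]; ring
  · simp [eta, hpk]

lemma B1_m0 (hm : m ≠ 0) : B1 f g m 0 x = 0 := by
  unfold B1
  refine Finset.sum_eq_zero fun p _ => Finset.sum_eq_zero fun k _ => ?_
  rw [Blow_eq, Bb_of_C f g (fun y => Cc_b0 f g m p hm y)]; ring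

lemma B2_0m : B2 f g 0 m x = 0 := by
  unfold B2
  refine Finset.sum_eq_zero fun p _ => ?_
  by_cases hp : p = 0
  · subst hp; exact Bb_of_C f g (fun y => Cc000 f g y) m x
  · exact Bb_of_C f g (fun y => Cc_c0 f g p p hp y) m x

lemma B2_m0 : B2 f g m 0 x = 0 := by
  unfold B2
  exact Finset.sum_eq_zero fun p _ => Bb_d0 f g p p m x

lemma B3_0m : B3 f g 0 m x = 0 := by
  unfold B3
  refine Finset.sum_eq_zero fun p _ => ?_
  by_cases hp : p = 0
  · subst hp; exact Bb_d0 f g 0 0 m x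
  · exact Bb_of_C f g (fun y => Cc_b0 f g p m hp y) p x

lemma B3_m0 : B3 f g m 0 x = 0 := by
  unfold B3
  refine Finset.sum_eq_zero fun p _ => ?_
  by_cases hp : p = 0
  · subst hp; exact Bb_d0 f g 0 m 0 x
  · exact Bb_of_C f g (fun y => Cc_c0 f g p m hp y) p x

lemma A1_0m (hm : m ≠ 0) : A1 f g 0 m x = 0 := by
  unfold A1
  refine Finset.sum_eq_zero fun k _ => ?_
  by_cases hk : k = 0
  · subst hk; rw [Cup0]; ring
  · rw [Clow_eq, Cc_0bc f g m k hm hk x]; ring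

lemma A1_m0 (hm : m ≠ 0) : A1 f g m 0 x = 0 := by
  unfold A1
  refine Finset.sum_eq_zero fun k _ => ?_
  rw [Clow_eq, Cc_b0 f g m k hm x]; ring

lemma A2_0m : A2 f g 0 m x = 0 := by
  unfold A2
  refine Finset.sum_eq_zero fun k _ => ?_
  by_cases hk : k = 0
  · subst hk; rw [Cup0]; ring
  · rw [Clow_eq, Cc_b0 f g k m hk x]; ring

lemma A2_m0 : A2 f g m 0 x = 0 := by
  unfold A2
  refine Finset.sum_eq_zero fun k _ => ?_
  by_cases hk : k = 0
  · subst hk; rw [Cup0]; ring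
  · rw [Clow_eq, Cc_c0 f g k m hk x]; ring

lemma A3_0m (hm : m ≠ 0) : A3 f g 0 m x = 0 := by
  unfold A3
  refine Finset.sum_eq_zero fun p _ => Finset.sum_eq_zero fun q _ => ?_
  by_cases hp : p = 0
  · subst hp
    have h : (∑ r, ∑ s, eta 0 r * eta q s * Clow f g m r s x) = 0 := by
      refine Finset.sum_eq_zero fun r _ => Finset.sum_eq_zero fun s _ => ?_
      by_cases hr : (0:Fin 4) = r
      · subst hr; rw [Clow_eq, Cc_b0 f g m s hm x]; ring
      · simp [eta, hr]
    rw [h]; ring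
  · by_cases hq : q = 0
    · subst hq
      have h : (∑ r, ∑ s, eta p r * eta 0 s * Clow f g m r s x) = 0 := by
        refine Finset.sum_eq_zero fun r _ => Finset.sum_eq_zero fun s _ => ?_
        by_cases hs : (0:Fin 4) = s
        · subst hs; rw [Clow_eq, Cc_c0 f g m r hm x]; ring
        · simp [eta, hs]
      rw [h]; ring
    · rw [Clow_eq, Cc_0bc f g p q hp hq x]; ring

lemma A3_m0 (hm : m ≠ 0) : A3 f g m 0 x = 0 := by
  unfold A3
  refine Finset.sum_eq_zero fun p _ => Finset.sum_eq_zero fun q _ => ?_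
  by_cases hp : p = 0
  · subst hp; rw [Clow_eq, Cc_b0 f g m q hm x]; ring
  · by_cases hq : q = 0
    · subst hq; rw [Clow_eq, Cc_c0 f g m p hm x]; ring
    · have h : (∑ r, ∑ s, eta p r * eta q s * Clow f g 0 r s x) = 0 := by
        refine Finset.sum_eq_zero fun r _ => Finset.sum_eq_zero fun s _ => ?_
        by_cases hr : p = r
        · subst hr
          by_cases hs : q = s
          · subst hs; rw [Clow_eq, Cc_0bc f g p q hp hq x]; ring
          · simp [eta, hs]
        · simp [eta, hr]
      rw [h]; ring

lemma A4_0m (hm : m ≠ 0) : A4 f g 0 m x = 0 := by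
  unfold A4
  refine Finset.sum_eq_zero fun p _ => Finset.sum_eq_zero fun q _ => ?_
  by_cases hp : p = 0
  · subst hp
    by_cases hq : q = 0
    · subst hq; rw [Clow_eq, Cc000]; ring
    · have h : (∑ r, ∑ s, eta 0 r * eta q s * Clow f g r m s x) = 0 := by
        refine Finset.sum_eq_zero fun r _ => Finset.sum_eq_zero fun s _ => ?_
        by_cases hr : (0:Fin 4) = r
        · subst hr
          by_cases hs : q = s
          · subst hs; rw [Clow_eq, Cc_0bc f g m q hm hq x]; ring
          · simp [eta, hs]
        · simp [eta, hr]
      rw [h]; ring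
  · by_cases hq : q = 0
    · subst hq
      have h : (∑ r, ∑ s, eta p r * eta 0 s * Clow f g r m s x) = 0 := by
        refine Finset.sum_eq_zero fun r _ => Finset.sum_eq_zero fun s _ => ?_
        by_cases hr : p = r
        · subst hr
          by_cases hs : (0:Fin 4) = s
          · subst hs; rw [Clow_eq, Cc_c0 f g p m hp x]; ring
          · simp [eta, hs]
        · simp [eta, hr]
      rw [h]; ring
    · rw [Clow_eq, Cc_0bc f g p q hp hq x]; ring

lemma A4_m0 (hm : m ≠ 0) : A4 f g m 0 x = 0 := by
  unfold A4
  refine Finset.sum_eq_zero fun p _ => Finset.sum_eq_zero fun q _ => ?_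
  by_cases hp : p = 0
  · subst hp; rw [Clow_eq, Cc_b0 f g m q hm x]; ring
  · have h : (∑ r, ∑ s, eta p r * eta q s * Clow f g r 0 s x) = 0 := by
      refine Finset.sum_eq_zero fun r _ => Finset.sum_eq_zero fun s _ => ?_
      by_cases hr : p = r
      · subst hr; rw [Clow_eq, Cc_b0 f g p s hp x]; ring
      · simp [eta, hr]
    rw [h]; ring

lemma A5_0m : A5 f g 0 m x = 0 := by
  unfold A5
  refine Finset.sum_eq_zero fun p _ => Finset.sum_eq_zero fun q _ => ?_
  by_cases hp : p = 0
  · subst hp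
    by_cases hq : q = 0
    · subst hq; rw [Clow_eq, Cc000]; ring
    · have h : (∑ r, ∑ s, eta q r * eta 0 s * Clow f g r m s x) = 0 := by
        refine Finset.sum_eq_zero fun r _ => Finset.sum_eq_zero fun s _ => ?_
        by_cases hr : q = r
        · subst hr
          by_cases hs : (0:Fin 4) = s
          · subst hs; rw [Clow_eq, Cc_c0 f g q m hq x]; ring
          · simp [eta, hs]
        · simp [eta, hr]
      rw [h]; ring
  · rw [Clow_eq, Cc_b0 f g p q hp x]; ring

lemma A5_m0 : A5 f g m 0 x = 0 := by
  unfold A5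
  refine Finset.sum_eq_zero fun p _ => Finset.sum_eq_zero fun q _ => ?_
  by_cases hq : q = 0
  · subst hq
    by_cases hp : p = 0
    · subst hp
      have h : (∑ r, ∑ s, eta 0 r * eta 0 s * Clow f g r 0 s x) = 0 := by
        refine Finset.sum_eq_zero fun r _ => Finset.sum_eq_zero fun s _ => ?_
        by_cases hr : (0:Fin 4) = r
        · subst hr
          by_cases hs : (0:Fin 4) = s
          · subst hs; rw [Clow_eq, Cc000]; ring
          · simp [eta, hs]
        · simp [eta, hr]
      rw [h]; ring
    · rw [Clow_eq, Cc_c0 f g p m hp x]; ring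
  · have h : (∑ r, ∑ s, eta q r * eta p s * Clow f g r 0 s x) = 0 := by
      refine Finset.sum_eq_zero fun r _ => Finset.sum_eq_zero fun s _ => ?_
      by_cases hr : q = r
      · subst hr; rw [Clow_eq, Cc_b0 f g q s hq x]; ring
      · simp [eta, hr]
    rw [h]; ring

lemma A6_0m (hm : m ≠ 0) : A6 f g 0 m x = 0 := by
  unfold A6
  refine Finset.sum_eq_zero fun p _ => Finset.sum_eq_zero fun q _ => ?_
  by_cases hp : p = 0
  · subst hp
    by_cases hq : q = 0
    · subst hq; rw [Clow_eq, Cc000]; ring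
    · have h : (∑ r, ∑ s, eta 0 r * eta q s * Clow f g r m s x) = 0 := by
        refine Finset.sum_eq_zero fun r _ => Finset.sum_eq_zero fun s _ => ?_
        by_cases hr : (0:Fin 4) = r
        · subst hr
          by_cases hs : q = s
          · subst hs; rw [Clow_eq, Cc_0bc f g m q hm hq x]; ring
          · simp [eta, hs]
        · simp [eta, hr]
      rw [h]; ring
  · rw [Clow_eq, Cc_b0 f g p q hp x]; ring

lemma A6_m0 (hm : m ≠ 0) : A6 f g m 0 x = 0 := by
  unfold A6
  refine Finset.sum_eq_zero fun p _ => Finset.sum_eq_zero fun q _ => ?_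
  by_cases hp : p = 0
  · subst hp
    by_cases hq : q = 0
    · subst hq
      have h : (∑ r, ∑ s, eta 0 r * eta 0 s * Clow f g r 0 s x) = 0 := by
        refine Finset.sum_eq_zero fun r _ => Finset.sum_eq_zero fun s _ => ?_
        by_cases hr : (0:Fin 4) = r
        · subst hr
          by_cases hs : (0:Fin 4) = s
          · subst hs; rw [Clow_eq, Cc000]; ring
          · simp [eta, hs]
        · simp [eta, hr]
      rw [h]; ring
    · rw [Clow_eq, Cc_0bc f g m q hm hq x]; ring
  · have h : (∑ r, ∑ s, eta p r * eta q s * Clow f g r 0 s x) = 0 := by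
      refine Finset.sum_eq_zero fun r _ => Finset.sum_eq_zero fun s _ => ?_
      by_cases hr : p = r
      · subst hr; rw [Clow_eq, Cc_b0 f g p s hp x]; ring
      · simp [eta, hr]
    rw [h]; ring

lemma A7_0m : A7 f g 0 m x = 0 := by
  unfold A7; rw [Cone0]; ring

lemma A7_m0 : A7 f g m 0 x = 0 := by
  unfold A7; rw [Cone0]; ring

end Mixed
/-- for the diagonal static ansatz, all mixed time–space components of
the field equation vanish identically. -/
theorem mixed_components_vanish
    (f g : (Fin 3 → ℝ) → ℝ) (hf : ContDiff ℝ (⊤ : ℕ∞) f) (hg : ContDiff ℝ (⊤ : ℕ∞) g)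
    (x : Fin 3 → ℝ)
    (β₁ β₂ β₃ β₄ β₅ β₆ α₁ α₂ α₃ α₄ α₅ α₆ α₇ α₈ α₉ α₁₀ α₁₁ α₁₂ : ℝ) :
    ∀ m : Fin 4, m ≠ 0 →
      Lmat f g β₁ β₂ β₃ β₄ β₅ β₆ 0 m x = 0 ∧
      Lmat f g β₁ β₂ β₃ β₄ β₅ β₆ m 0 x = 0 ∧
      Qmat f g α₁ α₂ α₃ α₄ α₅ α₆ α₇ α₈ α₉ α₁₀ α₁₁ α₁₂ 0 m x = 0 ∧
      Qmat f g α₁ α₂ α₃ α₄ α₅ α₆ α₇ α₈ α₉ α₁₀ α₁₁ α₁₂ m 0 x = 0 := by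
  intro m hm
  have h0m : eta 0 m = 0 := by simp [eta, Ne.symm hm]
  have hm0 : eta m 0 = 0 := by simp [eta, hm]
  refine ⟨?_, ?_, ?_, ?_⟩
  · unfold Lmat
    rw [B1_0m f g m x hm, B1_m0 f g m x hm, B2_0m f g m x, B2_m0 f g m x,
      B3_0m f g m x, h0m]
    ring
  · unfold Lmat
    rw [B1_0m f g m x hm, B1_m0 f g m x hm, B2_0m f g m x, B2_m0 f g m x,
      B3_m0 f g m x, hm0]
    ring
  · unfold Qmat
    rw [A1_0m f g m x hm, A1_m0 f g m x hm, A2_0m f g m x, A3_0m f g m x hm,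
      A4_0m f g m x hm, A4_m0 f g m x hm, A5_0m f g m x, A6_0m f g m x hm,
      A7_0m f g m x, h0m]
    ring
  · unfold Qmat
    rw [A1_0m f g m x hm, A1_m0 f g m x hm, A2_m0 f g m x, A3_m0 f g m x hm,
      A4_0m f g m x hm, A4_m0 f g m x hm, A5_m0 f g m x, A6_m0 f g m x hm,
      A7_m0 f g m x, hm0]
    ring
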